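/- Let G be a finitely generated group acting by isometries on an ℝ-tree Γ. If every element of G acts as an elliptic isometry, then there is a global fixed point, i.e. a point of Γ fixed by every element of G. -/

import Mathlib

open Set Filter Metric

section Common

variable {H : Type*} [MetricSpace H]

/-- `γ` parametrizes a geodesic from `a` to `b` by arclength on `[0, dist a b]`. -/
def IsGeodesicSegment (γ : ℝ → H) (a b : H) : Prop :=
  γ 0 = a ∧ γ (dist a b) = b ∧
    ∀ s ∈ Set.Icc (0:ℝ) (dist a b), ∀ t ∈ Set.Icc (0:ℝ) (dist a b),
      dist (γ s) (γ t) = |s - t|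

/-- A geodesic space: every pair of points is joined by a geodesic. -/
def GeodesicSpace (H : Type*) [MetricSpace H] : Prop :=
  ∀ a b : H, ∃ γ : ℝ → H, IsGeodesicSegment γ a b

/-- The image of a geodesic segment from `a` to `b`. -/
def segImage (γ : ℝ → H) (a b : H) : Set H :=
  γ '' Set.Icc 0 (dist a b)

/-- A space has `Δ`-thin triangles if each side of every geodesic triangle is contained
in the `Δ`-neighborhood of the union of the other two sides. -/
def ThinTriangles (H : Type*) [MetricSpace H] (Δ : ℝ) : Prop :=
  ∀ a b c : H, ∀ γab γbc γca : ℝ → H,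
    IsGeodesicSegment γab a b → IsGeodesicSegment γbc b c → IsGeodesicSegment γca c a →
      ∀ x ∈ segImage γab a b, ∃ y ∈ segImage γbc b c ∪ segImage γca c a, dist x y ≤ Δ

/-- An arc from `a` to `b`, parametrized (injectively and continuously) by `[0,1]`. -/
def IsArcParam (α : ℝ → H) (a b : H) : Prop :=
  ContinuousOn α (Set.Icc 0 1) ∧ Set.InjOn α (Set.Icc 0 1) ∧ α 0 = a ∧ α 1 = b

/-- An `ℝ`-tree: a metric space in which every pair of points is joined by a geodesic
(so it is a path-metric space and arcs are isometric to intervals of `ℝ`) and in which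
the arc joining two points is unique. -/
def IsRTree (X : Type*) [MetricSpace X] : Prop :=
  (∀ a b : X, ∃ γ : ℝ → X, IsGeodesicSegment γ a b) ∧
  ∀ a b : X, ∀ α β : ℝ → X, IsArcParam α a b → IsArcParam β a b →
    α '' Set.Icc 0 1 = β '' Set.Icc 0 1

/-- The translation length of an isometry. -/
noncomputable def translationLength {X : Type*} [MetricSpace X] (τ : X ≃ᵢ X) : ℝ :=
  ⨅ x : X, dist x (τ x)

/-- The core of an isometry of an `ℝ`-tree: points moved the minimal distance. -/
def isomCore {X : Type*} [MetricSpace X] (τ : X ≃ᵢ X) : Set X :=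
  {x : X | dist x (τ x) = translationLength τ}

/-- An elliptic isometry: one having a fixed point. -/
def IsElliptic {X : Type*} [MetricSpace X] (τ : X ≃ᵢ X) : Prop :=
  ∃ x, τ x = x

/-- A hyperbolic isometry of an `ℝ`-tree: positive translation length, with core
isometric to the real line (its axis). -/
def IsHyperbolicIsom {X : Type*} [MetricSpace X] (τ : X ≃ᵢ X) : Prop :=
  0 < translationLength τ ∧
    ∃ e : ℝ → X, (∀ s t : ℝ, dist (e s) (e t) = |s - t|) ∧ Set.range e = isomCore τ

/-- A metric simplicial tree: an `ℝ`-tree together with a closed discrete set `V` of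
vertices such that each connected component of the complement of `V` is an open edge:
it is the interior of a geodesic segment of positive length with endpoints in `V`. -/
def IsMetricSimplicialTree (X : Type*) [MetricSpace X] : Prop :=
  IsRTree X ∧
    ∃ V : Set X, IsClosed V ∧
      (∀ v ∈ V, ∃ ε > 0, ∀ w ∈ V, dist v w < ε → w = v) ∧
      ∀ x ∈ Vᶜ, ∃ L > (0:ℝ), ∃ f : ℝ → X,
        (∀ s ∈ Set.Icc (0:ℝ) L, ∀ t ∈ Set.Icc (0:ℝ) L, dist (f s) (f t) = |s - t|) ∧
        f '' Set.Ioo 0 L = connectedComponentIn Vᶜ x ∧ f 0 ∈ V ∧ f L ∈ V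

end Common

/-!
In an `ℝ`-tree the fixed-point set of an isometry is closed and convex, and every point `z` has a
gate in a nonempty closed convex set `F`: a point of `F` lying between `z` and every point of `F`.
If `g`, `h` and `g * h` are elliptic, let `z` be fixed by `g * h` and let `m`, `n` be the gates of
`z` in `Fix h` and `Fix g`. Then `m` is the midpoint of `[z, h z]` and `n` that of `[z, g z]`; since
`g` carries `[z, h z]` onto `[g z, z]`, we get `g m = n`, so `m = n` is fixed by both. Thus the
fixed sets of the generators meet pairwise, and by the Helly property of convex sets in an `ℝ`-tree
(a consequence of the existence of medians) they have a common point, fixed by the whole group.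
-/

open Function

section Betweenness

variable {X : Type*} [MetricSpace X]

def MetricBtw (a m b : X) : Prop := dist a m + dist m b = dist a b

def MetricConvex (C : Set X) : Prop := ∀ x ∈ C, ∀ y ∈ C, ∀ m, MetricBtw x m y → m ∈ C

def IsGate (F : Set X) (z p : X) : Prop :=
  p ∈ F ∧ ∀ f ∈ F, MetricBtw z p f

namespace MetricBtw

variable {a b c m : X}

lemma symm (h : MetricBtw a m b) : MetricBtw b m a := by
  unfold MetricBtw at *
  linarith [dist_comm a m, dist_comm m b, dist_comm a b]

lemma map (τ : X ≃ᵢ X) (h : MetricBtw a m b) : MetricBtw (τ a) (τ m) (τ b) := by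
  simpa only [MetricBtw, IsometryEquiv.dist_eq] using h

lemma dist_le (h : MetricBtw a m b) : dist a m ≤ dist a b :=
  h ▸ le_add_of_nonneg_right dist_nonneg

lemma trans_left (h₁ : MetricBtw a b c) (h₂ : MetricBtw a c m) : MetricBtw a b m := by
  unfold MetricBtw at *
  linarith [dist_triangle b c m, dist_triangle a b m]

lemma eq_of_swap_right (h₁ : MetricBtw a b c) (h₂ : MetricBtw a c b) : b = c := by
  unfold MetricBtw at *
  exact dist_eq_zero.mp (by linarith [dist_comm b c, dist_nonneg (x := b) (y := c)])

end MetricBtw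

lemma MetricConvex.inter {C D : Set X} (hC : MetricConvex C) (hD : MetricConvex D) :
    MetricConvex (C ∩ D) :=
  fun x hx y hy m hm => ⟨hC x hx.1 y hy.1 m hm, hD x hx.2 y hy.2 m hm⟩

lemma IsometryEquiv.dist_apply_of_isFixedPt {τ : X ≃ᵢ X} {m : X} (hm : IsFixedPt τ m) (z : X) :
    dist m (τ z) = dist z m := by
  conv_lhs => rw [← hm.eq]
  rw [τ.dist_eq, dist_comm]

end Betweenness

namespace IsGeodesicSegment

variable {X : Type*} [MetricSpace X] {γ : ℝ → X} {a b : X} {s t : ℝ}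

lemma dist_left (h : IsGeodesicSegment γ a b) (ht : t ∈ Icc 0 (dist a b)) :
    dist a (γ t) = t := by
  rw [← h.1, h.2.2 0 ⟨le_rfl, dist_nonneg⟩ t ht, zero_sub, abs_neg, abs_of_nonneg ht.1]

lemma dist_right (h : IsGeodesicSegment γ a b) (ht : t ∈ Icc 0 (dist a b)) :
    dist (γ t) b = dist a b - t := by
  conv_lhs => rw [← h.2.1]
  rw [h.2.2 t ht _ ⟨dist_nonneg, le_rfl⟩, abs_sub_comm, abs_of_nonneg (sub_nonneg.2 ht.2)]

lemma continuousOn (h : IsGeodesicSegment γ a b) : ContinuousOn γ (Icc 0 (dist a b)) :=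
  (LipschitzOnWith.of_dist_le_mul fun s hs t ht => by
    rw [h.2.2 s hs t ht, NNReal.coe_one, one_mul, Real.dist_eq]).continuousOn (K := 1)

lemma injOn (h : IsGeodesicSegment γ a b) : InjOn γ (Icc 0 (dist a b)) := by
  intro s hs t ht hst
  have := h.2.2 s hs t ht
  rw [hst, dist_self, eq_comm, abs_eq_zero, sub_eq_zero] at this
  exact this

lemma metricBtw_of_le (h : IsGeodesicSegment γ a b) (hs : s ∈ Icc 0 (dist a b))
    (ht : t ∈ Icc 0 (dist a b)) (hst : s ≤ t) : MetricBtw a (γ s) (γ t) := by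
  rw [MetricBtw, h.dist_left hs, h.dist_left ht, h.2.2 s hs t ht, abs_sub_comm,
    abs_of_nonneg (sub_nonneg.2 hst), add_sub_cancel]

lemma metricBtw (h : IsGeodesicSegment γ a b) (ht : t ∈ Icc 0 (dist a b)) :
    MetricBtw a (γ t) b := by
  simpa only [h.2.1] using h.metricBtw_of_le ht ⟨dist_nonneg, le_rfl⟩ ht.2

lemma apply_dist_of_mem {m : X} (h : IsGeodesicSegment γ a b) (hm : m ∈ segImage γ a b) :
    γ (dist a m) = m := by
  obtain ⟨t, ht, rfl⟩ := hm
  rw [h.dist_left ht]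

lemma dist_apply_of_le (h : IsGeodesicSegment γ a b) (hs : s ∈ Icc 0 (dist a b))
    (ht : t ∈ Icc 0 (dist a b)) (hst : s ≤ t) : dist (γ s) (γ t) = t - s := by
  rw [h.2.2 s hs t ht, abs_sub_comm, abs_of_nonneg (sub_nonneg.2 hst)]

lemma comp_add (h : IsGeodesicSegment γ a b) (hs : s ∈ Icc 0 (dist a b))
    (ht : t ∈ Icc 0 (dist a b)) (hst : s ≤ t) :
    IsGeodesicSegment (fun u => γ (s + u)) (γ s) (γ t) := by
  have hd := h.dist_apply_of_le hs ht hst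
  refine ⟨by simp, by simp only [hd, add_sub_cancel], fun u hu v hv => ?_⟩
  rw [hd] at hu hv
  rw [h.2.2 _ ⟨by linarith [hs.1, hu.1], by linarith [hu.2, ht.2]⟩
    _ ⟨by linarith [hs.1, hv.1], by linarith [hv.2, ht.2]⟩, add_sub_add_left_eq_sub]

lemma comp_sub (h : IsGeodesicSegment γ a b) (hs : s ∈ Icc 0 (dist a b))
    (ht : t ∈ Icc 0 (dist a b)) (hst : s ≤ t) :
    IsGeodesicSegment (fun u => γ (t - u)) (γ t) (γ s) := by
  have hd : dist (γ t) (γ s) = t - s := by rw [dist_comm, h.dist_apply_of_le hs ht hst]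
  refine ⟨by simp, by simp only [hd, sub_sub_cancel], fun u hu v hv => ?_⟩
  rw [hd] at hu hv
  rw [h.2.2 _ ⟨by linarith [hs.1, hu.2], by linarith [hu.1, ht.2]⟩
    _ ⟨by linarith [hs.1, hv.2], by linarith [hv.1, ht.2]⟩, sub_sub_sub_cancel_left, abs_sub_comm]

end IsGeodesicSegment

section Paths

variable {X : Type*} {γ₁ γ₂ : ℝ → X}

noncomputable def concatPath (γ₁ γ₂ : ℝ → X) (r : ℝ) (t : ℝ) : X :=
  if t ≤ r then γ₁ t else γ₂ (t - r)

lemma concatPath_of_le {r t : ℝ} (ht : t ≤ r) : concatPath γ₁ γ₂ r t = γ₁ t := if_pos ht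

lemma concatPath_of_ge {r t : ℝ} (hr : γ₁ r = γ₂ 0) (ht : r ≤ t) :
    concatPath γ₁ γ₂ r t = γ₂ (t - r) := by
  rcases ht.eq_or_lt with rfl | ht
  · rw [concatPath_of_le le_rfl, hr, sub_self]
  · exact if_neg ht.not_ge

lemma image_comp_mul_Icc (f : ℝ → X) {L : ℝ} (hL : 0 ≤ L) :
    (fun t => f (t * L)) '' Icc 0 1 = f '' Icc 0 L := by
  rw [← Set.image_image f (· * L), Set.image_mul_right_Icc zero_le_one hL, zero_mul, one_mul]

end Paths

section Arcs

variable {X : Type*} [MetricSpace X]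

lemma isArcParam_comp_mul {f : ℝ → X} {L : ℝ} (hL : 0 < L) (hf : ContinuousOn f (Icc 0 L))
    (hinj : InjOn f (Icc 0 L)) : IsArcParam (fun t => f (t * L)) (f 0) (f L) := by
  have hmaps : MapsTo (· * L) (Icc (0:ℝ) 1) (Icc 0 L) := fun t ht =>
    ⟨mul_nonneg ht.1 hL.le, by nlinarith [ht.2]⟩
  refine ⟨hf.comp (continuous_mul_const L).continuousOn hmaps,
    hinj.comp (mul_left_injective₀ hL.ne').injOn hmaps, by simp, by simp⟩

lemma IsRTree.image_eq_of_injOn (hX : IsRTree X) {f g : ℝ → X} {L M : ℝ} (hL : 0 < L)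
    (hM : 0 < M) (hf : ContinuousOn f (Icc 0 L)) (hfinj : InjOn f (Icc 0 L))
    (hg : ContinuousOn g (Icc 0 M)) (hginj : InjOn g (Icc 0 M))
    (h₀ : f 0 = g 0) (h₁ : f L = g M) : f '' Icc 0 L = g '' Icc 0 M := by
  have hfarc := isArcParam_comp_mul hL hf hfinj
  have hgarc := isArcParam_comp_mul hM hg hginj
  rw [h₀, h₁] at hfarc
  rw [← image_comp_mul_Icc f hL.le, ← image_comp_mul_Icc g hM.le]
  exact hX.2 _ _ _ _ hfarc hgarc

variable {γ₁ γ₂ : ℝ → X} {a m b : X}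

lemma continuousOn_concatPath (h₁ : IsGeodesicSegment γ₁ a m) (h₂ : IsGeodesicSegment γ₂ m b) :
    ContinuousOn (concatPath γ₁ γ₂ (dist a m)) (Icc 0 (dist a m + dist m b)) := by
  have hr : γ₁ (dist a m) = γ₂ 0 := h₁.2.1.trans h₂.1.symm
  rw [← Icc_union_Icc_eq_Icc dist_nonneg (le_add_of_nonneg_right dist_nonneg)]
  refine ContinuousOn.union_of_isClosed ?_ ?_ isClosed_Icc isClosed_Icc
  · exact h₁.continuousOn.congr fun t ht => concatPath_of_le ht.2
  · refine (h₂.continuousOn.comp (continuous_sub_right _).continuousOn fun t ht =>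
      ⟨sub_nonneg.2 ht.1, by linarith [ht.2]⟩).congr fun t ht => concatPath_of_ge hr ht.1

lemma injOn_concatPath (h₁ : IsGeodesicSegment γ₁ a m) (h₂ : IsGeodesicSegment γ₂ m b)
    (hmeet : ∀ u ∈ Icc 0 (dist a m), ∀ v ∈ Icc 0 (dist m b), γ₁ u = γ₂ v → v = 0) :
    InjOn (concatPath γ₁ γ₂ (dist a m)) (Icc 0 (dist a m + dist m b)) := by
  have hr : γ₁ (dist a m) = γ₂ 0 := h₁.2.1.trans h₂.1.symm
  have hmixed : ∀ s ∈ Icc 0 (dist a m + dist m b), ∀ t ∈ Icc 0 (dist a m + dist m b),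
      s ≤ dist a m → dist a m < t →
        concatPath γ₁ γ₂ (dist a m) s ≠ concatPath γ₁ γ₂ (dist a m) t := by
    intro s hs t ht hsr hrt hst
    rw [concatPath_of_le hsr, concatPath_of_ge hr hrt.le] at hst
    have := hmeet s ⟨hs.1, hsr⟩ (t - dist a m) ⟨by linarith, by linarith [ht.2]⟩ hst
    linarith
  intro s hs t ht hst
  rcases le_or_gt s (dist a m) with hsr | hrs <;> rcases le_or_gt t (dist a m) with htr | hrt
  · rw [concatPath_of_le hsr, concatPath_of_le htr] at hst
    exact h₁.injOn ⟨hs.1, hsr⟩ ⟨ht.1, htr⟩ hst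
  · exact absurd hst (hmixed s hs t ht hsr hrt)
  · exact absurd hst.symm (hmixed t ht s hs htr hrs)
  · rw [concatPath_of_ge hr hrs.le, concatPath_of_ge hr hrt.le] at hst
    have := h₂.injOn ⟨by linarith, by linarith [hs.2]⟩ ⟨by linarith, by linarith [ht.2]⟩ hst
    linarith

lemma MetricBtw.eq_zero_of_apply_eq (h : MetricBtw a m b) (h₁ : IsGeodesicSegment γ₁ a m)
    (h₂ : IsGeodesicSegment γ₂ m b) :
    ∀ u ∈ Icc 0 (dist a m), ∀ v ∈ Icc 0 (dist m b), γ₁ u = γ₂ v → v = 0 := by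
  intro u hu v hv huv
  have h₁l := h₁.dist_left hu
  have h₁r := h₁.dist_right hu
  have h₂l := h₂.dist_left hv
  have h₂r := h₂.dist_right hv
  rw [← huv, dist_comm] at h₂l
  rw [← huv] at h₂r
  unfold MetricBtw at h
  linarith [dist_triangle a (γ₁ u) b, hv.1]

end Arcs

namespace IsRTree

variable {X : Type*} [MetricSpace X] {γ₁ γ₂ δ : ℝ → X} {a b c m x y : X} {t₀ : ℝ}

lemma mem_segImage_of_meet (hX : IsRTree X) (h₁ : IsGeodesicSegment γ₁ a m)
    (h₂ : IsGeodesicSegment γ₂ m b)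
    (hmeet : ∀ u ∈ Icc 0 (dist a m), ∀ v ∈ Icc 0 (dist m b), γ₁ u = γ₂ v → v = 0)
    (hδ : IsGeodesicSegment δ a b) : m ∈ segImage δ a b := by
  rcases (add_nonneg dist_nonneg dist_nonneg : 0 ≤ dist a m + dist m b).eq_or_lt with hL | hL
  · have ham : a = m := dist_eq_zero.1 (by linarith [@dist_nonneg _ _ a m, @dist_nonneg _ _ m b])
    exact ⟨0, ⟨le_rfl, dist_nonneg⟩, by rw [hδ.1, ham]⟩
  have hr : γ₁ (dist a m) = γ₂ 0 := h₁.2.1.trans h₂.1.symm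
  have hα₀ : concatPath γ₁ γ₂ (dist a m) 0 = a := by rw [concatPath_of_le dist_nonneg, h₁.1]
  have hαL : concatPath γ₁ γ₂ (dist a m) (dist a m + dist m b) = b := by
    rw [concatPath_of_ge hr (le_add_of_nonneg_right dist_nonneg), add_sub_cancel_left, h₂.2.1]
  have hinj := injOn_concatPath h₁ h₂ hmeet
  have hab : 0 < dist a b := dist_pos.2 fun hab => by
    have := hinj ⟨le_rfl, hL.le⟩ ⟨hL.le, le_rfl⟩ (hα₀.trans (hab.trans hαL.symm))
    linarith
  rw [segImage, ← hX.image_eq_of_injOn hL hab (continuousOn_concatPath h₁ h₂) hinj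
    hδ.continuousOn hδ.injOn (hα₀.trans hδ.1.symm) (hαL.trans hδ.2.1.symm)]
  exact ⟨dist a m, ⟨dist_nonneg, le_add_of_nonneg_right dist_nonneg⟩,
    (concatPath_of_le le_rfl).trans h₁.2.1⟩

lemma metricBtw_of_meet (hX : IsRTree X) (h₁ : IsGeodesicSegment γ₁ a m)
    (h₂ : IsGeodesicSegment γ₂ m b)
    (hmeet : ∀ u ∈ Icc 0 (dist a m), ∀ v ∈ Icc 0 (dist m b), γ₁ u = γ₂ v → v = 0) :
    MetricBtw a m b := by
  obtain ⟨δ, hδ⟩ := hX.1 a b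
  obtain ⟨t, ht, rfl⟩ := hX.mem_segImage_of_meet h₁ h₂ hmeet hδ
  exact hδ.metricBtw ht

lemma apply_dist_of_metricBtw (hX : IsRTree X) (h : MetricBtw a x b)
    (hδ : IsGeodesicSegment δ a b) : δ (dist a x) = x := by
  obtain ⟨γ₁, h₁⟩ := hX.1 a x
  obtain ⟨γ₂, h₂⟩ := hX.1 x b
  exact hδ.apply_dist_of_mem (hX.mem_segImage_of_meet h₁ h₂ (h.eq_zero_of_apply_eq h₁ h₂) hδ)

lemma eq_of_metricBtw_of_dist_eq (hX : IsRTree X) (hx : MetricBtw a x b) (hy : MetricBtw a y b)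
    (hd : dist a x = dist a y) : x = y := by
  obtain ⟨δ, hδ⟩ := hX.1 a b
  rw [← hX.apply_dist_of_metricBtw hx hδ, ← hX.apply_dist_of_metricBtw hy hδ, hd]

lemma metricBtw_of_isGreatest (hX : IsRTree X) (h₁ : IsGeodesicSegment γ₁ a b)
    (h₂ : IsGeodesicSegment γ₂ a c)
    (ht₀ : IsGreatest (Icc 0 (min (dist a b) (dist a c)) ∩ {t | γ₁ t = γ₂ t}) t₀) :
    MetricBtw b (γ₁ t₀) c := by
  obtain ⟨⟨⟨h0, hmin⟩, heq⟩, hmax⟩ := ht₀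
  have ht₁ : t₀ ∈ Icc 0 (dist a b) := ⟨h0, hmin.trans (min_le_left _ _)⟩
  have ht₂ : t₀ ∈ Icc 0 (dist a c) := ⟨h0, hmin.trans (min_le_right _ _)⟩
  have hb := h₁.comp_sub ht₁ ⟨dist_nonneg, le_rfl⟩ ht₁.2
  have hc := h₂.comp_add ht₂ ⟨dist_nonneg, le_rfl⟩ ht₂.2
  rw [h₁.2.1] at hb
  rw [h₂.2.1, ← heq] at hc
  refine hX.metricBtw_of_meet hb hc fun u hu v hv huv => ?_
  rw [dist_comm, h₁.dist_right ht₁] at hu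
  rw [heq, h₂.dist_right ht₂] at hv
  have hs₁ : dist a b - u ∈ Icc 0 (dist a b) := ⟨by linarith [hu.2], by linarith [hu.1]⟩
  have hs₂ : t₀ + v ∈ Icc 0 (dist a c) := ⟨by linarith [hv.1], by linarith [hv.2]⟩
  have hs : dist a b - u = t₀ + v := by
    rw [← h₁.dist_left hs₁, ← h₂.dist_left hs₂]
    exact congrArg (dist a) huv
  have := hmax ⟨⟨hs₁.1, le_min hs₁.2 (hs ▸ hs₂.2)⟩, huv.trans (congrArg γ₂ hs.symm)⟩
  linarith [hv.1]

lemma exists_median (hX : IsRTree X) (a b c : X) :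
    ∃ m, MetricBtw a m b ∧ MetricBtw a m c ∧ MetricBtw b m c := by
  obtain ⟨γ₁, h₁⟩ := hX.1 a b
  obtain ⟨γ₂, h₂⟩ := hX.1 a c
  have hcont : ContinuousOn (fun t => (γ₁ t, γ₂ t)) (Icc 0 (min (dist a b) (dist a c))) :=
    (h₁.continuousOn.mono (Icc_subset_Icc_right (min_le_left _ _))).prodMk
      (h₂.continuousOn.mono (Icc_subset_Icc_right (min_le_right _ _)))
  have hT : IsCompact (Icc 0 (min (dist a b) (dist a c)) ∩ {t | γ₁ t = γ₂ t}) :=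
    isCompact_Icc.of_isClosed_subset
      (hcont.preimage_isClosed_of_isClosed isClosed_Icc isClosed_diagonal) inter_subset_left
  obtain ⟨t₀, ht₀⟩ :=
    hT.exists_isGreatest ⟨0, ⟨le_rfl, le_min dist_nonneg dist_nonneg⟩, h₁.1.trans h₂.1.symm⟩
  obtain ⟨⟨h0, hmin⟩, heq⟩ := ht₀.1
  refine ⟨γ₁ t₀, h₁.metricBtw ⟨h0, hmin.trans (min_le_left _ _)⟩, ?_,
    hX.metricBtw_of_isGreatest h₁ h₂ ht₀⟩
  rw [show γ₁ t₀ = γ₂ t₀ from heq]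
  exact h₂.metricBtw ⟨h0, hmin.trans (min_le_right _ _)⟩

lemma exists_isGate (hX : IsRTree X) {F : Set X} (hne : F.Nonempty) (hcl : IsClosed F)
    (hconv : MetricConvex F) (z : X) : ∃ p, IsGate F z p := by
  obtain ⟨f₀, hf₀⟩ := hne
  obtain ⟨γ, hγ⟩ := hX.1 z f₀
  have hT : IsCompact (Icc 0 (dist z f₀) ∩ γ ⁻¹' F) := isCompact_Icc.of_isClosed_subset
    (hγ.continuousOn.preimage_isClosed_of_isClosed isClosed_Icc hcl) inter_subset_left
  obtain ⟨t₀, ⟨ht₀, hpF⟩, hmin⟩ :=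
    hT.exists_isLeast ⟨dist z f₀, ⟨dist_nonneg, le_rfl⟩, by rw [mem_preimage, hγ.2.1]; exact hf₀⟩
  refine ⟨γ t₀, hpF, fun f hf => ?_⟩
  obtain ⟨m, hm₁, hm₂, hm₃⟩ := hX.exists_median z f₀ f
  have hmγ := hX.apply_dist_of_metricBtw hm₁ hγ
  have hs : dist z m ∈ Icc 0 (dist z f₀) := ⟨dist_nonneg, hm₁.dist_le⟩
  have hle : t₀ ≤ dist z m := hmin ⟨hs, by rw [mem_preimage, hmγ]; exact hconv _ hf₀ _ hf m hm₃⟩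
  have hp := hγ.metricBtw_of_le ht₀ hs hle
  rw [hmγ] at hp
  exact hp.trans_left hm₂

lemma metricConvex_fixedPoints (hX : IsRTree X) (τ : X ≃ᵢ X) : MetricConvex (fixedPoints τ) := by
  intro x hx y hy m hm
  have hτm := hm.map τ
  rw [hx.eq, hy.eq] at hτm
  refine hX.eq_of_metricBtw_of_dist_eq hτm hm ?_
  conv_lhs => rw [← hx.eq]
  exact τ.dist_eq x m

lemma metricBtw_apply_of_isGate (hX : IsRTree X) {τ : X ≃ᵢ X} {z m : X}
    (hm : IsGate (fixedPoints τ) z m) : MetricBtw z m (τ z) := by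
  obtain ⟨hmfix, hgate⟩ := hm
  obtain ⟨c, hc₁, hc₂, hc₃⟩ := hX.exists_median z (τ z) m
  -- the median `c` of `z`, `τ z`, `m` is fixed by `τ`, so the gate property forces `c = m`
  have hc₃' : MetricBtw z (τ.symm c) m := by
    simpa only [τ.symm_apply_apply, τ.symm_apply_eq.2 hmfix.eq.symm] using hc₃.map τ.symm
  have hdist : dist z (τ.symm c) = dist z c := by
    have h₁ : dist z (τ.symm c) = dist (τ z) c := by rw [← τ.dist_eq, τ.apply_symm_apply]
    unfold MetricBtw at hc₂ hc₃
    linarith [dist_comm (τ z) m, τ.dist_apply_of_isFixedPt hmfix z]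
  have hcfix : IsFixedPt τ c :=
    (τ.symm_apply_eq.1 (hX.eq_of_metricBtw_of_dist_eq hc₃' hc₂ hdist)).symm
  rwa [(hgate c hcfix).eq_of_swap_right hc₂]

lemma fixedPoints_inter_nonempty (hX : IsRTree X) {g h : X ≃ᵢ X} (hg : IsElliptic g)
    (hh : IsElliptic h) (hgh : IsElliptic (g * h)) :
    (fixedPoints g ∩ fixedPoints h).Nonempty := by
  obtain ⟨z, hz⟩ := hgh
  obtain ⟨m, hm⟩ := hX.exists_isGate (F := fixedPoints h) hh
    (isClosed_fixedPoints h.continuous) (hX.metricConvex_fixedPoints h) z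
  obtain ⟨n, hn⟩ := hX.exists_isGate (F := fixedPoints g) hg
    (isClosed_fixedPoints g.continuous) (hX.metricConvex_fixedPoints g) z
  have hzm := hX.metricBtw_apply_of_isGate hm
  have hzn := hX.metricBtw_apply_of_isGate hn
  have hghz : g (h z) = z := hz
  have hdist : dist z m = dist z n := by
    have : dist z (h z) = dist z (g z) := by rw [← g.dist_eq, hghz, dist_comm]
    unfold MetricBtw at hzm hzn
    linarith [h.dist_apply_of_isFixedPt hm.1 z, g.dist_apply_of_isFixedPt hn.1 z]
  have hgm : MetricBtw z (g m) (g z) := by simpa only [hghz] using (hzm.map g).symm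
  have hgmn : g m = n := by
    refine hX.eq_of_metricBtw_of_dist_eq hgm hzn ?_
    calc dist z (g m) = dist (g (h z)) (g m) := by rw [hghz]
      _ = dist z n := by rw [g.dist_eq, dist_comm, h.dist_apply_of_isFixedPt hm.1, hdist]
  have hmn : m = n := g.injective (hgmn.trans hn.1.eq.symm)
  exact ⟨m, hmn ▸ hn.1, hm.1⟩

lemma helly_three (hX : IsRTree X) {C₁ C₂ C₃ : Set X} (h₁ : MetricConvex C₁)
    (h₂ : MetricConvex C₂) (h₃ : MetricConvex C₃) (h₁₂ : (C₁ ∩ C₂).Nonempty)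
    (h₂₃ : (C₂ ∩ C₃).Nonempty) (h₁₃ : (C₁ ∩ C₃).Nonempty) : (C₁ ∩ C₂ ∩ C₃).Nonempty := by
  obtain ⟨x, hx₁, hx₂⟩ := h₁₂
  obtain ⟨y, hy₂, hy₃⟩ := h₂₃
  obtain ⟨w, hw₁, hw₃⟩ := h₁₃
  obtain ⟨m, hxy, hxw, hyw⟩ := hX.exists_median x y w
  exact ⟨m, ⟨h₁ x hx₁ w hw₁ m hxw, h₂ x hx₂ y hy₂ m hxy⟩, h₃ y hy₃ w hw₃ m hyw⟩

lemma helly [Nonempty X] (hX : IsRTree X) {ι : Type*} (S : Finset ι) (C : ι → Set X)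
    (hconv : ∀ i ∈ S, MetricConvex (C i)) (hpair : ∀ i ∈ S, ∀ j ∈ S, (C i ∩ C j).Nonempty) :
    ∃ x, ∀ i ∈ S, x ∈ C i := by
  classical
  induction S using Finset.induction_on generalizing C with
  | empty => exact ⟨Classical.arbitrary X, by simp⟩
  | insert a s _ ih =>
    have ha := Finset.mem_insert_self a s
    have hs {i} (hi : i ∈ s) : i ∈ insert a s := Finset.mem_insert_of_mem hi
    obtain ⟨x, hx⟩ := ih (fun i => C i ∩ C a) (fun i hi => (hconv i (hs hi)).inter (hconv a ha))
      fun i hi j hj => by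
        obtain ⟨x, ⟨hxi, hxj⟩, hxa⟩ := hX.helly_three (hconv i (hs hi)) (hconv j (hs hj))
          (hconv a ha) (hpair i (hs hi) j (hs hj)) (hpair j (hs hj) a ha) (hpair i (hs hi) a ha)
        exact ⟨x, ⟨hxi, hxa⟩, hxj, hxa⟩
    rcases s.eq_empty_or_nonempty with rfl | ⟨j, hj⟩
    · obtain ⟨y, hy, -⟩ := hpair a ha a ha
      exact ⟨y, by simpa using hy⟩
    · exact ⟨x, (Finset.forall_mem_insert a s _).2 ⟨(hx j hj).2, fun i hi => (hx i hi).1⟩⟩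

end IsRTree

lemma apply_eq_of_closure_eq_top {G X : Type*} [Group G] [PseudoEMetricSpace X] {S : Set G}
    (hS : Subgroup.closure S = ⊤) (σ : G →* (X ≃ᵢ X)) {x : X} (hx : ∀ s ∈ S, σ s x = x)
    (g : G) : σ g x = x := by
  let H : Subgroup G :=
    { carrier := {g | σ g x = x}
      mul_mem' := fun {a b} (ha : σ a x = x) (hb : σ b x = x) => by
        show σ (a * b) x = x
        rw [map_mul, IsometryEquiv.mul_apply, hb, ha]
      one_mem' := by
        show σ 1 x = x
        rw [map_one, IsometryEquiv.coe_one, id]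
      inv_mem' := fun {a} (ha : σ a x = x) => by
        show σ a⁻¹ x = x
        conv_lhs => rw [← ha]
        rw [map_inv, IsometryEquiv.inv_apply_self] }
  exact (Subgroup.closure_le H).2 hx (hS ▸ Subgroup.mem_top g)

/-- If a finitely generated group acts by isometries on an `ℝ`-tree
and every element acts as an elliptic isometry, then there is a global fixed point. -/
theorem global_fixed_point_of_all_elliptic {G : Type*} [Group G] (hG : Group.FG G)
    {X : Type*} [MetricSpace X] [Nonempty X] (hX : IsRTree X)
    (σ : G →* (X ≃ᵢ X)) (hell : ∀ g : G, IsElliptic (σ g)) :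
    ∃ x : X, ∀ g : G, σ g x = x := by
  obtain ⟨S, hS⟩ := hG.out
  obtain ⟨x, hx⟩ := hX.helly S (fun s => fixedPoints (σ s))
    (fun s _ => hX.metricConvex_fixedPoints (σ s)) fun i _ j _ =>
      hX.fixedPoints_inter_nonempty (hell i) (hell j) (map_mul σ i j ▸ hell (i * j))
  exact ⟨x, apply_eq_of_closure_eq_top hS σ hx⟩
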